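/- If gcd(a, b) > 1, then (R_a · R_b)/R_{gcd(a,b)} divides gcd(R_{ab}, R_a · R_b), and gcd(R_{ab}, R_a · R_b) < R_a · R_b, where R_n = (10^n - 1)/9. -/
import Mathlib

def repunit (n : ℕ) : ℕ := (10 ^ n - 1) / 9

-- basic facts
lemma nine_dvd (n : ℕ) : 9 ∣ 10 ^ n - 1 := by
  simpa using Nat.sub_dvd_pow_sub_pow 10 1 n

lemma nine_mul_repunit (n : ℕ) : 9 * repunit n = 10 ^ n - 1 :=
  Nat.mul_div_cancel' (nine_dvd n)

lemma repunit_pos {n : ℕ} (hn : 1 ≤ n) : 0 < repunit n := by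
  have h : (10:ℕ) ^ 1 ≤ 10 ^ n := Nat.pow_le_pow_right (by norm_num) hn
  have := nine_mul_repunit n
  omega

lemma pow_sub_one_dvd {m n : ℕ} (h : m ∣ n) : 10 ^ m - 1 ∣ 10 ^ n - 1 := by
  obtain ⟨k, rfl⟩ := h
  have := Nat.sub_dvd_pow_sub_pow (10 ^ m) 1 k
  simpa [pow_mul] using this

lemma repunit_dvd {m n : ℕ} (h : m ∣ n) : repunit m ∣ repunit n := by
  have h9 : 9 * repunit m ∣ 9 * repunit n := by
    rw [nine_mul_repunit, nine_mul_repunit]; exact pow_sub_one_dvd h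
  exact (Nat.mul_dvd_mul_iff_left (by norm_num : 0 < 9)).mp h9

-- gcd of 10^a-1 and 10^b-1
lemma gcd_pow_sub_one : ∀ a b : ℕ, Nat.gcd (10 ^ a - 1) (10 ^ b - 1) = 10 ^ Nat.gcd a b - 1
  | 0, b => by simp
  | (a+1), b => by
    have hm : 0 < a + 1 := Nat.succ_pos a
    set m := a + 1 with hmdef
    have hb : b = m * (b / m) + b % m := (Nat.div_add_mod b m).symm
    -- 10^b - 1 = (10^(b%m) - 1) + 10^(b%m) * (10^(m*(b/m)) - 1)
    obtain ⟨k, hk⟩ : 10 ^ m - 1 ∣ 10 ^ (m * (b / m)) - 1 := pow_sub_one_dvd ⟨b / m, rfl⟩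
    have h1 : (1:ℕ) ≤ 10 ^ (b % m) := Nat.one_le_pow _ _ (by norm_num)
    have h2 : (1:ℕ) ≤ 10 ^ (m * (b / m)) := Nat.one_le_pow _ _ (by norm_num)
    have hsplit : 10 ^ b - 1 = (10 ^ (b % m) - 1) + (10 ^ (b % m) * k) * (10 ^ m - 1) := by
      have hpow : (10:ℕ) ^ b = 10 ^ (m * (b / m)) * 10 ^ (b % m) := by
        rw [← pow_add, Nat.div_add_mod]
      obtain ⟨q, hq⟩ : ∃ q, (10:ℕ) ^ (m * (b / m)) = q + 1 := ⟨10 ^ (m * (b / m)) - 1, by omega⟩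
      rw [hq] at hk hpow
      simp only [Nat.add_sub_cancel] at hk
      have e1 : 10 ^ (b % m) * k * (10 ^ m - 1) = q * 10 ^ (b % m) := by
        rw [mul_assoc, mul_comm k, ← hk]; ring
      have e2 : (q + 1) * 10 ^ (b % m) = q * 10 ^ (b % m) + 10 ^ (b % m) := by ring
      omega
    rw [hsplit, Nat.gcd_add_mul_right_right, Nat.gcd_comm,
      gcd_pow_sub_one (b % m) m, Nat.gcd_rec m b]
decreasing_by exact Nat.mod_lt _ hm

lemma gcd_repunit (a b : ℕ) : Nat.gcd (repunit a) (repunit b) = repunit (Nat.gcd a b) := by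
  have h9 : 9 * Nat.gcd (repunit a) (repunit b) = 9 * repunit (Nat.gcd a b) := by
    rw [← Nat.gcd_mul_left, nine_mul_repunit, nine_mul_repunit, nine_mul_repunit,
      gcd_pow_sub_one]
  omega

-- geometric sum
lemma natGeomSumMul (x : ℕ) (hx : 1 ≤ x) : ∀ b : ℕ,
    (x - 1) * (∑ i ∈ Finset.range b, x ^ i) = x ^ b - 1
  | 0 => by simp
  | (b+1) => by
    rw [Finset.sum_range_succ, Nat.mul_add, natGeomSumMul x hx b, Nat.sub_mul, one_mul,
      ← pow_succ']
    have h1 : (1:ℕ) ≤ x ^ b := Nat.one_le_pow _ _ hx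
    have h2 : x ^ b ≤ x ^ (b+1) := Nat.pow_le_pow_right hx (Nat.le_succ b)
    have : x * x ^ b = x ^ (b+1) := by rw [pow_succ']
    omega

-- the key: if R_a * R_b divides R_(a*b), then R_(gcd a b) divides b
lemma key_dvd {a b : ℕ} (ha : 1 ≤ a) (hb : 1 ≤ b)
    (hdvd : repunit a * repunit b ∣ repunit (a * b)) : repunit (Nat.gcd a b) ∣ b := by
  set x := (10:ℕ) ^ a with hx
  have hx1 : 1 ≤ x := Nat.one_le_pow _ _ (by norm_num)
  set G := ∑ i ∈ Finset.range b, x ^ i with hG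
  have hgeo : (x - 1) * G = 10 ^ (a * b) - 1 := by
    rw [natGeomSumMul x hx1 b, hx, ← pow_mul]
  -- R_a * G = R_(a*b)
  have hRaG : repunit a * G = repunit (a * b) := by
    have : 9 * (repunit a * G) = 9 * repunit (a * b) := by
      rw [← mul_assoc, nine_mul_repunit, nine_mul_repunit, ← hgeo]
    omega
  -- R_b ∣ G
  have hRbG : repunit b ∣ G := by
    have hpos := repunit_pos ha
    have : repunit a * repunit b ∣ repunit a * G := by rw [hRaG]; exact hdvd
    exact (Nat.mul_dvd_mul_iff_left hpos).mp this
  -- G = (sum of x^i - 1) + b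
  have hGb : G = (∑ i ∈ Finset.range b, (x ^ i - 1)) + b := by
    rw [hG]
    have : ∀ i ∈ Finset.range b, x ^ i = (x ^ i - 1) + 1 := by
      intro i _
      have : (1:ℕ) ≤ x ^ i := Nat.one_le_pow _ _ hx1
      omega
    rw [Finset.sum_congr rfl this, Finset.sum_add_distrib]
    simp
  have hbG : b ≤ G := by omega
  -- R_a divides G - b
  have hRaGb : repunit a ∣ G - b := by
    have hsum : (x - 1) ∣ ∑ i ∈ Finset.range b, (x ^ i - 1) := by
      apply Finset.dvd_sum
      intro i _
      simpa using Nat.sub_dvd_pow_sub_pow x 1 i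
    have : G - b = ∑ i ∈ Finset.range b, (x ^ i - 1) := by omega
    rw [this]
    exact dvd_trans ⟨9, by rw [hx, ← nine_mul_repunit a]; ring⟩ hsum
  -- R_d divides both G and G - b, hence b
  have hd1 : repunit (Nat.gcd a b) ∣ G := dvd_trans (repunit_dvd (Nat.gcd_dvd_right a b)) hRbG
  have hd2 : repunit (Nat.gcd a b) ∣ G - b := dvd_trans (repunit_dvd (Nat.gcd_dvd_left a b)) hRaGb
  have := Nat.dvd_sub hd1 hd2
  rwa [Nat.sub_sub_self hbG] at this

lemma d_lt_repunit {d : ℕ} (hd : 2 ≤ d) : d < repunit d := by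
  obtain ⟨n, rfl⟩ : ∃ n, d = n + 2 := ⟨d - 2, by omega⟩
  have h : ∀ n : ℕ, 9 * (n + 2) < 10 ^ (n + 2) - 1 := by
    intro n
    induction n with
    | zero => norm_num
    | succ k ih =>
      have h2 : (10:ℕ) ^ (k + 1 + 2) = 10 * 10 ^ (k + 2) := by ring
      have h1 : (1:ℕ) ≤ 10 ^ (k + 2) := Nat.one_le_pow _ _ (by norm_num)
      omega
  have := h n
  have := nine_mul_repunit (n + 2)
  omega

theorem repunit_gcd_bounds (a b : ℕ) (ha : 1 ≤ a) (hb : 1 ≤ b)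
    (h : 1 < Nat.gcd a b) :
    (repunit a * repunit b / repunit (Nat.gcd a b)) ∣
      Nat.gcd (repunit (a * b)) (repunit a * repunit b) ∧
    Nat.gcd (repunit (a * b)) (repunit a * repunit b) < repunit a * repunit b := by
  set d := Nat.gcd a b with hd
  have hd2 : 2 ≤ d := h
  have hdpos : 0 < repunit d := repunit_pos (by omega)
  have hgcd : Nat.gcd (repunit a) (repunit b) = repunit d := gcd_repunit a b
  have hlcm_eq : repunit a * repunit b / repunit d = Nat.lcm (repunit a) (repunit b) := by
    have heq := Nat.gcd_mul_lcm (repunit a) (repunit b)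
    rw [hgcd] at heq
    rw [← heq]
    exact Nat.mul_div_cancel_left _ hdpos
  constructor
  · rw [hlcm_eq]
    apply Nat.dvd_gcd
    · exact Nat.lcm_dvd (repunit_dvd ⟨b, rfl⟩) (repunit_dvd ⟨a, mul_comm a b⟩)
    · exact Nat.lcm_dvd (Dvd.intro _ rfl) (Dvd.intro_left _ rfl)
  · have hab_pos : 0 < repunit a * repunit b :=
      Nat.mul_pos (repunit_pos ha) (repunit_pos hb)
    have hne : ¬ (repunit a * repunit b ∣ repunit (a * b)) := by
      intro hdvd
      have h1 : repunit d ∣ b := key_dvd ha hb hdvd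
      have h2 : repunit d ∣ a := by
        have hdvd' : repunit b * repunit a ∣ repunit (b * a) := by
          rwa [mul_comm (repunit b), mul_comm b a]
        have := key_dvd hb ha hdvd'
        rwa [Nat.gcd_comm] at this
      have hdd : repunit d ∣ d := Nat.dvd_gcd h2 h1
      have := Nat.le_of_dvd (by omega) hdd
      have := d_lt_repunit hd2
      omega
    have hle : Nat.gcd (repunit (a*b)) (repunit a * repunit b) ≤ repunit a * repunit b :=
      Nat.le_of_dvd hab_pos (Nat.gcd_dvd_right _ _)
    rcases lt_or_eq_of_le hle with h' | h'
    · exact h'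
    · exfalso
      exact hne (h' ▸ Nat.gcd_dvd_left _ _)
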